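/- arXiv:2106.02992 — 4 statements merged into one kernel-verified Lean document; each statement's English description precedes it below -/
import Mathlib

section
/- Let P be an M×M irreducible row-stochastic matrix with (unique, entrywise positive) stationary probability vector π, and let D = diag(d_1,...,d_M) with d_i ∈ (0,1). Define the vector π̃ by π̃_i = π_i / d_i and set π̂ = π̃ / (Σ_i π̃_i). Then π̂ is an entrywise positive probability vector and is a stationary probability vector of the matrix P̂ = D·P − D + I, i.e., π̂·P̂ = π̂. -/
open Matrix Finset Filter

/-- A matrix is row-stochastic if all entries are nonnegative and each row sums to 1. -/
def RowStochastic {M : ℕ} (P : Matrix (Fin M) (Fin M) ℝ) : Prop :=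
  (∀ i j, 0 ≤ P i j) ∧ (∀ i, ∑ j, P i j = 1)

/-- A matrix is irreducible if for every pair of indices `i, j` there is `k ≥ 1`
with `(P ^ k) i j > 0`. -/
def IsIrreducibleMatrix {M : ℕ} (P : Matrix (Fin M) (Fin M) ℝ) : Prop :=
  ∀ i j, ∃ k : ℕ, 1 ≤ k ∧ 0 < (P ^ k) i j

/-- `π` is a stationary probability (row) vector of `P`. -/
def IsStationaryProbVec {M : ℕ} (P : Matrix (Fin M) (Fin M) ℝ) (π : Fin M → ℝ) : Prop :=
  (∀ i, 0 ≤ π i) ∧ (∑ i, π i = 1) ∧ π ᵥ* P = π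

theorem Matrix.vecMul_diagonal_mul_sub_diagonal_add_one_eq_self {n R : Type*} [Fintype n]
    [DecidableEq n] [Ring R] (P : Matrix n n R) (d w : n → R)
    (hw : (w ᵥ* diagonal d) ᵥ* P = w ᵥ* diagonal d) :
    w ᵥ* (diagonal d * P - diagonal d + 1) = w := by
  rw [vecMul_add, vecMul_sub, ← vecMul_vecMul, hw, vecMul_one, sub_self, zero_add]

theorem stmt_2_general {M : ℕ} (P : Matrix (Fin M) (Fin M) ℝ) (π d : Fin M → ℝ)
    (hπ : IsStationaryProbVec P π) (hπpos : ∀ i, 0 < π i)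
    (hd : ∀ i, d i ∈ Set.Ioo (0 : ℝ) 1)
    (πt : Fin M → ℝ) (hπt : ∀ i, πt i = π i / d i)
    (πhat : Fin M → ℝ) (hπhat : ∀ i, πhat i = πt i / ∑ j, πt j) :
    (∀ i, 0 < πhat i) ∧ (∑ i, πhat i = 1) ∧
      πhat ᵥ* (Matrix.diagonal d * P - Matrix.diagonal d + 1) = πhat := by
  obtain ⟨-, hπ_sum, hπ_stat⟩ := hπ
  have hπt_pos : ∀ i, 0 < πt i := fun i => hπt i ▸ div_pos (hπpos i) (hd i).1
  have hS : 0 < ∑ j, πt j :=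
    Finset.sum_pos (fun i _ => hπt_pos i) (nonempty_of_sum_ne_zero (hπ_sum ▸ one_ne_zero))
  have hπtD : πt ᵥ* diagonal d = π := by
    funext j
    rw [vecMul_diagonal, hπt j, div_mul_cancel₀ _ (hd j).1.ne']
  have hπhat_smul : πhat = (∑ j, πt j)⁻¹ • πt := by
    funext i
    rw [hπhat i, Pi.smul_apply, smul_eq_mul, inv_mul_eq_div]
  refine ⟨fun i => hπhat i ▸ div_pos (hπt_pos i) hS, ?_, ?_⟩
  · simp_rw [hπhat, ← sum_div, div_self hS.ne']
  · rw [hπhat_smul, smul_vecMul, vecMul_diagonal_mul_sub_diagonal_add_one_eq_self P d πt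
      (by rw [hπtD, hπ_stat])]

theorem stmt_2 {M : ℕ} (P : Matrix (Fin M) (Fin M) ℝ) (π d : Fin M → ℝ)
    (hP : RowStochastic P) (hirr : IsIrreducibleMatrix P)
    (hπ : IsStationaryProbVec P π) (hπpos : ∀ i, 0 < π i)
    (hd : ∀ i, d i ∈ Set.Ioo (0 : ℝ) 1)
    (πt : Fin M → ℝ) (hπt : ∀ i, πt i = π i / d i)
    (πhat : Fin M → ℝ) (hπhat : ∀ i, πhat i = πt i / ∑ j, πt j) :
    (∀ i, 0 < πhat i) ∧ (∑ i, πhat i = 1) ∧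
      πhat ᵥ* (Matrix.diagonal d * P - Matrix.diagonal d + 1) = πhat :=
  stmt_2_general P π d hπ hπpos hd πt hπt πhat hπhat
end

section
/- Let P be an M×M irreducible row-stochastic matrix with stationary probability vector π, let D = diag(d_1,...,d_M) with d_i ∈ (0,1), and set P̂ = D·P − D + I. If π̃ is any entrywise nonnegative nonzero row vector satisfying π̃·(P̂ − I) = 0, then π̃·D is a positive scalar multiple of π. Consequently the stationary probability vector of P̂ is unique. -/
open Matrix Finset Filter

/-- `π` is a stationary probability (row) vector of `P`. -/
def IsStationaryRowVec {M : ℕ} (P : Matrix (Fin M) (Fin M) ℝ) (π : Fin M → ℝ) : Prop :=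
  (∀ i, 0 ≤ π i) ∧ (∑ i, π i = 1) ∧ π ᵥ* P = π


/-!
A nonnegative nonzero left fixed vector `v` of an irreducible nonnegative matrix is positive, since
`v j ≥ v i (P ^ k) i j > 0`. Subtracting from any fixed vector the largest multiple `t • π` of a
positive fixed vector that keeps it nonnegative leaves a nonnegative fixed vector with a zero entry,
hence the zero vector: the left fixed space is the line through `π`. Now
`σ (D P - D + I) = σ` says exactly that `σ D` is a left fixed vector of `P`; for a stationary `σ`
of `P̂` the normalisation `∑ σ i = 1` then pins down the multiple, because `D` is invertible.
-/

lemma vecMul_pow_of_vecMul_eq_self {n : Type*} [Fintype n] [DecidableEq n]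
    {P : Matrix n n ℝ} {v : n → ℝ} (hv : v ᵥ* P = v) (k : ℕ) : v ᵥ* (P ^ k) = v := by
  induction k with
  | zero => simp
  | succ k ih => rw [pow_succ, ← vecMul_vecMul, ih, hv]

lemma IsStationaryRowVec.ne_zero {M : ℕ} {P : Matrix (Fin M) (Fin M) ℝ} {π : Fin M → ℝ}
    (hπ : IsStationaryRowVec P π) : π ≠ 0 := by
  rintro rfl
  simpa using hπ.2.1

section Perturbation

variable {n : Type*} [Fintype n] [DecidableEq n] {P : Matrix n n ℝ} {d w : n → ℝ}

lemma vecMul_diagonal_vecMul_eq_self (hw : w ᵥ* (diagonal d * P - diagonal d) = 0) :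
    (w ᵥ* diagonal d) ᵥ* P = w ᵥ* diagonal d := by
  rwa [vecMul_sub, sub_eq_zero, ← vecMul_vecMul] at hw

lemma vecMul_diagonal_mul_sub_eq_zero_of_vecMul_eq_self
    (hw : w ᵥ* (diagonal d * P - diagonal d + 1) = w) :
    w ᵥ* (diagonal d * P - diagonal d) = 0 := by
  rwa [vecMul_add, vecMul_one, add_eq_right] at hw

lemma vecMul_diagonal_nonneg (hd : ∀ i, 0 < d i) (hw0 : ∀ i, 0 ≤ w i) (i : n) :
    0 ≤ (w ᵥ* diagonal d) i := by
  rw [vecMul_diagonal]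
  exact mul_nonneg (hw0 i) (hd i).le

lemma vecMul_diagonal_ne_zero (hd : ∀ i, 0 < d i) (hw_ne : w ≠ 0) : w ᵥ* diagonal d ≠ 0 := by
  obtain ⟨i, hi⟩ := Function.ne_iff.mp hw_ne
  refine Function.ne_iff.mpr ⟨i, ?_⟩
  rw [vecMul_diagonal]
  exact mul_ne_zero hi (hd i).ne'

lemma eq_of_vecMul_diagonal_eq {w' : n → ℝ} (hd : ∀ i, d i ≠ 0)
    (h : w ᵥ* diagonal d = w' ᵥ* diagonal d) : w = w' :=
  funext fun i => by simpa [vecMul_diagonal, hd i] using congrFun h i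

end Perturbation

namespace IsIrreducibleMatrix

variable {M : ℕ} {P : Matrix (Fin M) (Fin M) ℝ}

lemma pos_of_vecMul_eq_self (hirr : IsIrreducibleMatrix P) (hP : ∀ i j, 0 ≤ P i j)
    {v : Fin M → ℝ} (hv0 : ∀ i, 0 ≤ v i) (hv_ne : v ≠ 0) (hv : v ᵥ* P = v) (j : Fin M) :
    0 < v j := by
  obtain ⟨i, hi⟩ := Function.ne_iff.mp hv_ne
  obtain ⟨k, -, hk⟩ := hirr i j
  calc 0 < v i * (P ^ k) i j := mul_pos ((hv0 i).lt_of_ne' hi) hk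
    _ ≤ ∑ l, v l * (P ^ k) l j :=
        Finset.single_le_sum (f := fun l => v l * (P ^ k) l j)
          (fun l _ => mul_nonneg (hv0 l) (pow_apply_nonneg hP k l j)) (Finset.mem_univ i)
    _ = v j := congrFun (vecMul_pow_of_vecMul_eq_self hv k) j

lemma exists_eq_smul_of_vecMul_eq_self (hirr : IsIrreducibleMatrix P) (hP : ∀ i j, 0 ≤ P i j)
    {π v : Fin M → ℝ} (hπ_pos : ∀ i, 0 < π i) (hπ : π ᵥ* P = π) (hv : v ᵥ* P = v) :
    ∃ t : ℝ, v = t • π := by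
  rcases isEmpty_or_nonempty (Fin M) with _ | _
  · exact ⟨0, Subsingleton.elim _ _⟩
  obtain ⟨i₀, -, hmin⟩ := Finset.exists_min_image Finset.univ (fun i => v i / π i)
    Finset.univ_nonempty
  set t := v i₀ / π i₀
  have hw0 : ∀ i, 0 ≤ (v - t • π) i := fun i => by
    have := (le_div_iff₀ (hπ_pos i)).mp (hmin i (Finset.mem_univ i))
    simp only [Pi.sub_apply, Pi.smul_apply, smul_eq_mul]
    linarith
  have hw_i₀ : (v - t • π) i₀ = 0 := by
    simp [t, div_mul_cancel₀ _ (hπ_pos i₀).ne']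
  have hw : (v - t • π) ᵥ* P = v - t • π := by
    rw [sub_vecMul, smul_vecMul, hv, hπ]
  refine ⟨t, sub_eq_zero.mp ?_⟩
  by_contra hw_ne
  exact (hirr.pos_of_vecMul_eq_self hP hw0 hw_ne hw i₀).ne' hw_i₀

lemma pos_vecMul_diagonal (hirr : IsIrreducibleMatrix P) (hP : ∀ i j, 0 ≤ P i j)
    {d w : Fin M → ℝ} (hd : ∀ i, 0 < d i) (hw0 : ∀ i, 0 ≤ w i) (hw_ne : w ≠ 0)
    (hw : w ᵥ* (diagonal d * P - diagonal d) = 0) (i : Fin M) : 0 < (w ᵥ* diagonal d) i :=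
  hirr.pos_of_vecMul_eq_self hP (vecMul_diagonal_nonneg hd hw0) (vecMul_diagonal_ne_zero hd hw_ne)
    (vecMul_diagonal_vecMul_eq_self hw) i

end IsIrreducibleMatrix

theorem stmt_3 {M : ℕ} (P : Matrix (Fin M) (Fin M) ℝ) (π d : Fin M → ℝ)
    (hP : RowStochastic P) (hirr : IsIrreducibleMatrix P)
    (hπ : IsStationaryRowVec P π)
    (hd : ∀ i, d i ∈ Set.Ioo (0 : ℝ) 1)
    (πt : Fin M → ℝ) (hπt_nonneg : ∀ i, 0 ≤ πt i) (hπt_ne : πt ≠ 0)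
    (hπt_eig : πt ᵥ* (Matrix.diagonal d * P - Matrix.diagonal d + 1 - 1) = 0) :
    (∃ c : ℝ, 0 < c ∧ πt ᵥ* Matrix.diagonal d = c • π) ∧
      (∀ σ σ' : Fin M → ℝ,
        IsStationaryRowVec (Matrix.diagonal d * P - Matrix.diagonal d + 1) σ →
        IsStationaryRowVec (Matrix.diagonal d * P - Matrix.diagonal d + 1) σ' →
        σ = σ') := by
  have hPn := hP.1
  have hd_pos : ∀ i, 0 < d i := fun i => (hd i).1
  have hπ_pos := hirr.pos_of_vecMul_eq_self hPn hπ.1 hπ.ne_zero hπ.2.2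
  constructor
  · rw [add_sub_cancel_right] at hπt_eig
    obtain ⟨c, hc⟩ := hirr.exists_eq_smul_of_vecMul_eq_self hPn hπ_pos hπ.2.2
      (vecMul_diagonal_vecMul_eq_self hπt_eig)
    obtain ⟨i, -⟩ := Function.ne_iff.mp hπt_ne
    have hi := hirr.pos_vecMul_diagonal hPn hd_pos hπt_nonneg hπt_ne hπt_eig i
    rw [hc] at hi
    exact ⟨c, pos_of_mul_pos_left hi (hπ_pos i).le, hc⟩
  · intro σ σ' hσ hσ'
    have hσ_eig := vecMul_diagonal_mul_sub_eq_zero_of_vecMul_eq_self hσ.2.2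
    have hσ'_eig := vecMul_diagonal_mul_sub_eq_zero_of_vecMul_eq_self hσ'.2.2
    obtain ⟨s, hs⟩ := hirr.exists_eq_smul_of_vecMul_eq_self hPn
      (hirr.pos_vecMul_diagonal hPn hd_pos hσ'.1 hσ'.ne_zero hσ'_eig)
      (vecMul_diagonal_vecMul_eq_self hσ'_eig) (vecMul_diagonal_vecMul_eq_self hσ_eig)
    rw [← smul_vecMul] at hs
    have hσ_eq := eq_of_vecMul_diagonal_eq (fun i => (hd_pos i).ne') hs
    have hs_one : s = 1 := by
      have hsum := congrArg (fun v => ∑ i, v i) hσ_eq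
      simpa [hσ.2.1, hσ'.2.1, ← Finset.mul_sum, eq_comm] using hsum
    rw [hσ_eq, hs_one, one_smul]
end

section
/- Let M ≥ 2, let π* ∈ ℝ^M be an entrywise positive probability row vector, and let P ∈ ℝ^{M×M} be an irreducible row-stochastic matrix with stationary probability vector π. Then there exists a diagonal matrix D = diag(d_1,...,d_M) with d_i ∈ (0,1) for all i such that the matrix P* = D·P − D + I is an irreducible row-stochastic matrix whose stationary probability vector is π*. -/
/-!
If `D = diag(d)` with `π* D = c π` for a scalar `c > 0`, then
`π* (D P - D + I) = c π P - c π + π* = π*`, so `π*` is stationary for `P* = D P - D + I`.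
Taking `d_i = c π_i / π*_i` with `c` small makes every `d_i` lie in `(0, 1)`; this needs the
stationary vector `π` of the irreducible `P` to be positive. Then `P*` is row-stochastic, and its
entries dominate `d_i P_ij`, so `P*` has at least the positive entries of `P` and stays irreducible.
-/

open Matrix Finset Filter

namespace Matrix

variable {n R : Type*} [Fintype n] [DecidableEq n]

theorem vecMul_pow_of_vecMul_eq [Semiring R] {A : Matrix n n R} {v : n → R}
    (h : v ᵥ* A = v) (k : ℕ) : v ᵥ* A ^ k = v := by
  induction k with
  | zero => simp
  | succ k ih => rw [pow_succ, ← vecMul_vecMul, ih, h]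

theorem pow_apply_pos_of_pos_imp [Semiring R] [LinearOrder R] [IsStrictOrderedRing R]
    {A B : Matrix n n R} (hA : ∀ i j, 0 ≤ A i j) (hB : ∀ i j, 0 ≤ B i j)
    (hBA : ∀ i j, 0 < B i j → 0 < A i j) (k : ℕ) (i j : n) (h : 0 < (B ^ k) i j) :
    0 < (A ^ k) i j := by
  induction k generalizing j with
  | zero => simpa only [pow_zero] using h
  | succ k ih =>
    rw [pow_succ, mul_apply] at h ⊢
    obtain ⟨l, -, hl⟩ := Finset.exists_lt_of_sum_lt (s := univ) (f := 0)
      (g := fun l => (B ^ k) i l * B l j) (by simpa using h)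
    have hBk : 0 < (B ^ k) i l := pos_of_mul_pos_left hl (hB l j)
    have hBl : 0 < B l j := pos_of_mul_pos_right hl (pow_apply_nonneg hB k i l)
    exact Finset.sum_pos' (fun x _ => mul_nonneg (pow_apply_nonneg hA k i x) (hA x j))
      ⟨l, Finset.mem_univ l, mul_pos (ih l hBk) (hBA l j hBl)⟩

theorem diagonal_mul_sub_diagonal_add_one_apply [CommRing R] (d : n → R) (A : Matrix n n R)
    (i j : n) :
    (diagonal d * A - diagonal d + 1) i j = d i * A i j + if i = j then 1 - d i else 0 := by
  by_cases h : i = j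
  · subst h
    simp only [add_apply, sub_apply, diagonal_mul, diagonal_apply_eq, one_apply_eq, if_true]
    ring
  · simp [h, one_apply_ne h]

theorem mul_apply_le_diagonal_mul_sub_diagonal_add_one_apply [CommRing R] [PartialOrder R]
    [IsOrderedRing R] {d : n → R} (hd : ∀ i, d i ≤ 1) (A : Matrix n n R) (i j : n) :
    d i * A i j ≤ (diagonal d * A - diagonal d + 1) i j := by
  rw [diagonal_mul_sub_diagonal_add_one_apply]
  split_ifs
  · exact le_add_of_nonneg_right (sub_nonneg.2 (hd i))
  · simp

theorem vecMul_diagonal_mul_sub_diagonal_add_one_eq_self_s4 [CommRing R] {d v : n → R}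
    {A : Matrix n n R} (h : (v ᵥ* diagonal d) ᵥ* A = v ᵥ* diagonal d) :
    v ᵥ* (diagonal d * A - diagonal d + 1) = v := by
  rw [vecMul_add, vecMul_sub, vecMul_one, ← vecMul_vecMul, h, sub_self, zero_add]

end Matrix

theorem exists_pos_forall_mul_lt {ι : Type*} [Finite ι] (a : ι → ℝ) {b : ι → ℝ}
    (hb : ∀ i, 0 < b i) : ∃ c > 0, ∀ i, c * a i < b i := by
  have h : ∀ i, ∀ᶠ c in nhdsWithin (0 : ℝ) (Set.Ioi 0), c * a i < b i := fun i =>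
    nhdsWithin_le_nhds <| (continuous_id.mul continuous_const).continuousAt.eventually_lt
      continuousAt_const (by simpa using hb i)
  obtain ⟨c, hlt, hc⟩ := ((eventually_all.2 h).and self_mem_nhdsWithin).exists
  exact ⟨c, hc, hlt⟩

theorem IsStationaryProbVec.pos {M : ℕ} {P : Matrix (Fin M) (Fin M) ℝ} {π : Fin M → ℝ}
    (hP : ∀ i j, 0 ≤ P i j) (hirr : IsIrreducibleMatrix P) (hπ : IsStationaryProbVec P π)
    (i : Fin M) : 0 < π i := by
  obtain ⟨hπnn, hπsum, hπP⟩ := hπ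
  obtain ⟨j, -, hj⟩ := Finset.exists_lt_of_sum_lt (s := univ) (f := 0) (g := π) (by simp [hπsum])
  obtain ⟨k, -, hk⟩ := hirr j i
  rw [← vecMul_pow_of_vecMul_eq hπP k]
  exact Finset.sum_pos' (fun l _ => mul_nonneg (hπnn l) (pow_apply_nonneg hP k l i))
    ⟨j, mem_univ j, mul_pos hj hk⟩

theorem IsIrreducibleMatrix.of_pos_imp {M : ℕ} {P Q : Matrix (Fin M) (Fin M) ℝ}
    (hirr : IsIrreducibleMatrix P) (hP : ∀ i j, 0 ≤ P i j) (hQ : ∀ i j, 0 ≤ Q i j)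
    (hPQ : ∀ i j, 0 < P i j → 0 < Q i j) : IsIrreducibleMatrix Q := fun i j =>
  (hirr i j).imp fun k ⟨hk, hpos⟩ => ⟨hk, pow_apply_pos_of_pos_imp hQ hP hPQ k i j hpos⟩

theorem RowStochastic.diagonal_mul_sub_diagonal_add_one {M : ℕ} {P : Matrix (Fin M) (Fin M) ℝ}
    (hP : RowStochastic P) {d : Fin M → ℝ} (hd : ∀ i, d i ∈ Set.Icc (0 : ℝ) 1) :
    RowStochastic (diagonal d * P - diagonal d + 1) := by
  refine ⟨fun i j => (mul_nonneg (hd i).1 (hP.1 i j)).trans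
    (mul_apply_le_diagonal_mul_sub_diagonal_add_one_apply (fun i => (hd i).2) P i j), fun i => ?_⟩
  simp only [diagonal_mul_sub_diagonal_add_one_apply, sum_add_distrib, ← mul_sum, hP.2 i,
    sum_ite_eq, mem_univ, if_true]
  ring

theorem IsIrreducibleMatrix.diagonal_mul_sub_diagonal_add_one {M : ℕ}
    {P : Matrix (Fin M) (Fin M) ℝ} (hirr : IsIrreducibleMatrix P) (hP : RowStochastic P)
    {d : Fin M → ℝ} (hd : ∀ i, d i ∈ Set.Ioc (0 : ℝ) 1) :
    IsIrreducibleMatrix (diagonal d * P - diagonal d + 1) := by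
  have hle := mul_apply_le_diagonal_mul_sub_diagonal_add_one_apply (fun i => (hd i).2) P
  exact hirr.of_pos_imp hP.1 (fun i j => (mul_nonneg (hd i).1.le (hP.1 i j)).trans (hle i j))
    fun i j hij => (mul_pos (hd i).1 hij).trans_le (hle i j)

theorem stmt_4_general {M : ℕ}
    (πstar : Fin M → ℝ) (hπstar_pos : ∀ i, 0 < πstar i) (hπstar_sum : ∑ i, πstar i = 1)
    (P : Matrix (Fin M) (Fin M) ℝ) (π : Fin M → ℝ)
    (hP : RowStochastic P) (hirr : IsIrreducibleMatrix P)
    (hπ : IsStationaryProbVec P π) :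
    ∃ d : Fin M → ℝ, (∀ i, d i ∈ Set.Ioo (0 : ℝ) 1) ∧
      RowStochastic (Matrix.diagonal d * P - Matrix.diagonal d + 1) ∧
      IsIrreducibleMatrix (Matrix.diagonal d * P - Matrix.diagonal d + 1) ∧
      IsStationaryProbVec (Matrix.diagonal d * P - Matrix.diagonal d + 1) πstar := by
  have hπpos := hπ.pos hP.1 hirr
  obtain ⟨c, hc, hcπ⟩ := exists_pos_forall_mul_lt π hπstar_pos
  set d : Fin M → ℝ := fun i => c * π i / πstar i
  have hd : ∀ i, d i ∈ Set.Ioo (0 : ℝ) 1 := fun i =>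
    ⟨div_pos (mul_pos hc (hπpos i)) (hπstar_pos i), (div_lt_one (hπstar_pos i)).2 (hcπ i)⟩
  have hπstar_d : πstar ᵥ* diagonal d = c • π := by
    ext i
    simp [vecMul_diagonal, d, mul_div_cancel₀ _ (hπstar_pos i).ne']
  refine ⟨d, hd, hP.diagonal_mul_sub_diagonal_add_one fun i => Set.Ioo_subset_Icc_self (hd i),
    hirr.diagonal_mul_sub_diagonal_add_one hP fun i => Set.Ioo_subset_Ioc_self (hd i),
    fun i => (hπstar_pos i).le, hπstar_sum,
    vecMul_diagonal_mul_sub_diagonal_add_one_eq_self_s4 ?_⟩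
  rw [hπstar_d, smul_vecMul, hπ.2.2]

theorem stmt_4 {M : ℕ} (hM : 2 ≤ M)
    (πstar : Fin M → ℝ) (hπstar_pos : ∀ i, 0 < πstar i) (hπstar_sum : ∑ i, πstar i = 1)
    (P : Matrix (Fin M) (Fin M) ℝ) (π : Fin M → ℝ)
    (hP : RowStochastic P) (hirr : IsIrreducibleMatrix P)
    (hπ : IsStationaryProbVec P π) :
    ∃ d : Fin M → ℝ, (∀ i, d i ∈ Set.Ioo (0 : ℝ) 1) ∧
      RowStochastic (Matrix.diagonal d * P - Matrix.diagonal d + 1) ∧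
      IsIrreducibleMatrix (Matrix.diagonal d * P - Matrix.diagonal d + 1) ∧
      IsStationaryProbVec (Matrix.diagonal d * P - Matrix.diagonal d + 1) πstar :=
  stmt_4_general πstar hπstar_pos hπstar_sum P π hP hirr hπ
end

section
/- Let P be an M×M irreducible row-stochastic matrix with stationary probability vector π, and let p* ∈ ℝ^M be an entrywise positive probability row vector. If D = diag(d_1,...,d_M) with d_i ∈ (0,1) is such that p* is a stationary probability vector of P̂ = D·P − D + I, then necessarily p*·D = c·π for some scalar c > 0; equivalently, d_i = c·π_i / p*_i for every i. -/
open Matrix Finset Filter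

/-!
The stationarity of `p*` for `D P - D + I` says exactly that `p* D` is a left fixed vector of `P`.
For an irreducible nonnegative matrix the nonnegative fixed vectors are either zero or entrywise
positive, since mass at `i` is carried by `(P ^ k) i j > 0` to every `j`. Applying this to
`p* D - c π`, with `c = min_i (p* D)_i / π_i` chosen so that this vector is nonnegative with a zero
entry, forces `p* D = c π`.
-/

namespace Matrix

variable {n R : Type*} [Fintype n] [DecidableEq n]

theorem vecMul_mul_sub_add_one_eq_self_iff [Ring R] (A B : Matrix n n R) (v : n → R) :
    v ᵥ* (B * A - B + 1) = v ↔ (v ᵥ* B) ᵥ* A = v ᵥ* B := by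
  rw [vecMul_add, vecMul_sub, vecMul_one, ← vecMul_vecMul, add_eq_right, sub_eq_zero]

theorem vecMul_pow_eq_self [Semiring R] {A : Matrix n n R} {v : n → R} (hv : v ᵥ* A = v)
    (k : ℕ) : v ᵥ* (A ^ k) = v := by
  induction k with
  | zero => simp
  | succ k ih => rw [pow_succ, ← vecMul_vecMul, ih, hv]

variable {A : Matrix n n R} {v : n → R}

section OrderedRing

variable [Ring R] [LinearOrder R] [IsStrictOrderedRing R]

theorem IsIrreducible.pos_of_vecMul_eq_self (hA : A.IsIrreducible) (hv0 : 0 ≤ v)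
    (hv : v ᵥ* A = v) (hne : v ≠ 0) (j : n) : 0 < v j := by
  obtain ⟨i, hi⟩ : ∃ i, 0 < v i := by
    by_contra! h
    exact hne (funext fun i => le_antisymm (h i) (hv0 i))
  obtain ⟨k, -, hk⟩ := (isIrreducible_iff_exists_pow_pos hA.nonneg).1 hA i j
  calc 0 < v i * (A ^ k) i j := mul_pos hi hk
    _ ≤ ∑ l, v l * (A ^ k) l j :=
      single_le_sum (fun l _ => mul_nonneg (hv0 l) (pow_apply_nonneg hA.nonneg k l j))
        (mem_univ i)
    _ = v j := congrFun (vecMul_pow_eq_self hv k) j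

end OrderedRing

section OrderedField

variable [Field R] [LinearOrder R] [IsStrictOrderedRing R]

theorem IsIrreducible.exists_eq_smul_of_vecMul_eq_self (hA : A.IsIrreducible) {π : n → R}
    (hπ0 : ∀ i, 0 < π i) (hπ : π ᵥ* A = π) (hv : v ᵥ* A = v) : ∃ c : R, v = c • π := by
  cases isEmpty_or_nonempty n
  · exact ⟨0, Subsingleton.elim _ _⟩
  obtain ⟨m, -, hm⟩ := exists_min_image univ (fun i => v i / π i) univ_nonempty
  refine ⟨v m / π m, ?_⟩
  set x := v - (v m / π m) • π
  have hx0 : 0 ≤ x := fun i => by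
    have := (le_div_iff₀ (hπ0 i)).1 (hm i (mem_univ i))
    simp only [x, Pi.zero_apply, Pi.sub_apply, Pi.smul_apply, smul_eq_mul]
    linarith
  have hxm : x m = 0 := by
    simp [x, div_mul_cancel₀ _ (hπ0 m).ne']
  have hx : x ᵥ* A = x := by
    rw [sub_vecMul, smul_vecMul, hv, hπ]
  by_contra hne
  exact (hA.pos_of_vecMul_eq_self hx0 hx (sub_ne_zero.2 hne) m).ne' hxm

end OrderedField

end Matrix

theorem stmt_14_general {M : ℕ} (P : Matrix (Fin M) (Fin M) ℝ) (π pstar d : Fin M → ℝ)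
    (hP : RowStochastic P) (hirr : IsIrreducibleMatrix P)
    (hπ : IsStationaryRowVec P π)
    (hpstar_pos : ∀ i, 0 < pstar i)
    (hd : ∀ i, d i ∈ Set.Ioo (0 : ℝ) 1)
    (hstat : IsStationaryRowVec (Matrix.diagonal d * P - Matrix.diagonal d + 1) pstar) :
    ∃ c : ℝ, 0 < c ∧ (pstar ᵥ* Matrix.diagonal d = c • π) ∧
      (∀ i, d i = c * π i / pstar i) := by
  obtain ⟨hπ0, hπsum, hπP⟩ := hπ
  have hPirr : P.IsIrreducible := (isIrreducible_iff_exists_pow_pos hP.1).2 hirr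
  have hπne : π ≠ 0 := fun h => by simp [h] at hπsum
  have hπpos := hPirr.pos_of_vecMul_eq_self hπ0 hπP hπne
  have hfix := (vecMul_mul_sub_add_one_eq_self_iff P (diagonal d) pstar).1 hstat.2.2
  obtain ⟨c, hc⟩ := hPirr.exists_eq_smul_of_vecMul_eq_self hπpos hπP hfix
  have hcoord (i : Fin M) : pstar i * d i = c * π i := by
    simpa [vecMul_diagonal] using congrFun hc i
  obtain ⟨i₀, -⟩ := Function.ne_iff.1 hπne
  have hcpos : 0 < c :=
    pos_of_mul_pos_left (hcoord i₀ ▸ mul_pos (hpstar_pos i₀) (hd i₀).1) (hπpos i₀).le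
  refine ⟨c, hcpos, hc, fun i => ?_⟩
  rw [← hcoord i, mul_div_cancel_left₀ _ (hpstar_pos i).ne']

theorem stmt_14 {M : ℕ} (P : Matrix (Fin M) (Fin M) ℝ) (π pstar d : Fin M → ℝ)
    (hP : RowStochastic P) (hirr : IsIrreducibleMatrix P)
    (hπ : IsStationaryRowVec P π)
    (hpstar_pos : ∀ i, 0 < pstar i) (hpstar_sum : ∑ i, pstar i = 1)
    (hd : ∀ i, d i ∈ Set.Ioo (0 : ℝ) 1)
    (hstat : IsStationaryRowVec (Matrix.diagonal d * P - Matrix.diagonal d + 1) pstar) :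
    ∃ c : ℝ, 0 < c ∧ (pstar ᵥ* Matrix.diagonal d = c • π) ∧
      (∀ i, d i = c * π i / pstar i) :=
  stmt_14_general P π pstar d hP hirr hπ hpstar_pos hd hstat
end
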